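/- Let M be a cone over a smooth domain in S^n ⊂ R^{n+1}. If there exists an isoperimetric region in M of some volume V₀ > 0, then for every V > 0 there exists an isoperimetric region in M of volume V. -/

import Mathlib

open MeasureTheory Metric Set ENNReal
open scoped RealInnerProductSpace Pointwise

noncomputable section

/-- The ambient Euclidean space `ℝ^{n+1}`. -/
abbrev Euc (n : ℕ) : Type := EuclideanSpace ℝ (Fin (n+1))

/-- Divergence of a vector field on `ℝ^{n+1}`. -/
def divg (n : ℕ) (Y : Euc n → Euc n) (x : Euc n) : ℝ :=
  ∑ i : Fin (n+1),
    ⟪fderiv ℝ Y x (EuclideanSpace.basisFun (Fin (n+1)) ℝ i),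
      (EuclideanSpace.basisFun (Fin (n+1)) ℝ i : Euc n)⟫

/-- Perimeter of `Ω` relative to the open set `U`: the supremum of `∫_Ω div Y`
over smooth compactly supported vector fields `Y` with support in `U`, `|Y| ≤ 1`. -/
def relPerimeter (n : ℕ) (U Ω : Set (Euc n)) : ℝ≥0∞ :=
  ⨆ (Y : Euc n → Euc n) (_ : ContDiff ℝ (⊤ : ℕ∞) Y) (_ : HasCompactSupport Y)
    (_ : tsupport Y ⊆ U) (_ : ∀ x, ‖Y x‖ ≤ 1),
      ENNReal.ofReal (∫ x in Ω, divg n Y x)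

/-- The open solid cone over a subset `C` of the unit sphere. -/
def coneOver (n : ℕ) (C : Set (Euc n)) : Set (Euc n) :=
  {p | ∃ t : ℝ, 0 < t ∧ ∃ x ∈ C, p = t • x}

/-- `C` is a domain in the unit sphere: a nonempty, connected, relatively open
subset of `𝕊ⁿ ⊂ ℝ^{n+1}`. -/
structure IsSphDomain (n : ℕ) (C : Set (Euc n)) : Prop where
  subset_sphere : C ⊆ sphere (0 : Euc n) 1
  nonempty : C.Nonempty
  connected : IsConnected C
  relOpen : ∃ U : Set (Euc n), IsOpen U ∧ C = U ∩ sphere (0 : Euc n) 1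

/-- The isoperimetric profile of `M` for relative perimeter. -/
def isoProfile (n : ℕ) (M : Set (Euc n)) (V : ℝ) : ℝ≥0∞ :=
  ⨅ (Ω : Set (Euc n)) (_ : Ω ⊆ M ∧ MeasurableSet Ω ∧ volume Ω = ENNReal.ofReal V),
    relPerimeter n M Ω

/-- `Ω` is an isoperimetric region of volume `V` in `M`. -/
def IsIsoRegion (n : ℕ) (M : Set (Euc n)) (V : ℝ) (Ω : Set (Euc n)) : Prop :=
  Ω ⊆ M ∧ MeasurableSet Ω ∧ volume Ω = ENNReal.ofReal V ∧
    relPerimeter n M Ω = isoProfile n M V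

/-- The isoperimetric profile of the half-space in `ℝ^{n+1}`. -/
def halfProfile (n : ℕ) (V : ℝ) : ℝ≥0∞ :=
  (μH[(n : ℝ)] (sphere (0 : Euc n) 1) / 2) ^ ((1 : ℝ)/(n+1)) *
    ENNReal.ofReal ((n + 1 : ℝ) ^ ((n : ℝ)/(n+1)) * V ^ ((n : ℝ)/(n+1)))

section Aux

variable {n : ℕ}

lemma divg_comp_smul {Y : Euc n → Euc n} (hY : ContDiff ℝ (⊤ : ℕ∞) Y) (l : ℝ) (x : Euc n) :
    divg n (fun y => Y (l • y)) x = l * divg n Y (l • x) := by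
  have h1 : HasFDerivAt (fun y : Euc n => l • y) (l • ContinuousLinearMap.id ℝ (Euc n)) x :=
    (hasFDerivAt_id x).const_smul l
  have h2 : HasFDerivAt Y (fderiv ℝ Y (l • x)) (l • x) :=
    (hY.differentiable (by simp) (l • x)).hasFDerivAt
  have h3 : HasFDerivAt (fun y => Y (l • y))
      ((fderiv ℝ Y (l • x)).comp (l • ContinuousLinearMap.id ℝ (Euc n))) x := h2.comp x h1
  unfold divg
  rw [h3.fderiv, Finset.mul_sum]
  congr 1; ext i
  simp [real_inner_smul_left]

lemma integral_divg_smul {Y : Euc n → Euc n} (hY : ContDiff ℝ (⊤ : ℕ∞) Y) {l : ℝ} (hl : 0 < l)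
    (Ω : Set (Euc n)) :
    ∫ x in l • Ω, divg n Y x = l ^ n * ∫ x in Ω, divg n (fun y => Y (l • y)) x := by
  have hc : l ^ n * (l * (l ^ (n+1))⁻¹) = 1 := by
    rw [← mul_assoc, ← pow_succ, mul_inv_cancel₀ (pow_ne_zero _ hl.ne')]
  symm
  calc l ^ n * ∫ x in Ω, divg n (fun y => Y (l • y)) x
      = l ^ n * ∫ x in Ω, l * divg n Y (l • x) := by
        congr 1
        exact integral_congr_ae (Filter.Eventually.of_forall fun x => divg_comp_smul hY l x)
    _ = l ^ n * (l * ∫ x in Ω, divg n Y (l • x)) := by rw [integral_const_mul]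
    _ = l ^ n * (l * ((l ^ (n+1))⁻¹ • ∫ x in l • Ω, divg n Y x)) := by
        rw [Measure.setIntegral_comp_smul_of_pos volume (divg n Y) Ω hl,
          finrank_euclideanSpace_fin]
    _ = ∫ x in l • Ω, divg n Y x := by
        rw [smul_eq_mul, ← mul_assoc, ← mul_assoc]
        rw [mul_assoc (l ^ n) l, hc, one_mul]

lemma smul_coneOver {C : Set (Euc n)} {l : ℝ} (hl : 0 < l) :
    l • coneOver n C = coneOver n C := by
  have hsub : ∀ m : ℝ, 0 < m → m • coneOver n C ⊆ coneOver n C := by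
    rintro m hm p ⟨q, ⟨t, ht, x, hx, rfl⟩, rfl⟩
    exact ⟨m * t, mul_pos hm ht, x, hx, (smul_smul m t x)⟩
  refine subset_antisymm (hsub l hl) fun p hp => ?_
  exact ⟨l⁻¹ • p, hsub l⁻¹ (inv_pos.2 hl) (Set.smul_mem_smul_set hp), smul_inv_smul₀ hl.ne' p⟩

lemma measurableSet_smul {l : ℝ} (hl : l ≠ 0) {Ω : Set (Euc n)} (hΩ : MeasurableSet Ω) :
    MeasurableSet (l • Ω) := by
  have h : l • Ω = (fun x : Euc n => l⁻¹ • x) ⁻¹' Ω := by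
    ext x; exact mem_smul_set_iff_inv_smul_mem₀ hl _ _
  rw [h]; exact hΩ.preimage (measurable_const_smul _)

lemma volume_smul {l : ℝ} (hl : 0 ≤ l) (Ω : Set (Euc n)) :
    volume (l • Ω) = ENNReal.ofReal (l ^ (n+1)) * volume Ω := by
  rw [Measure.addHaar_smul_of_nonneg volume hl, finrank_euclideanSpace_fin]

lemma inv_smul_set_eq {l : ℝ} (hl : l ≠ 0) {M : Set (Euc n)} (hMl : l • M = M) :
    l⁻¹ • M = M := by
  conv_lhs => rw [← hMl, inv_smul_smul₀ hl]

lemma ofReal_pow_mul_inv_pow {l : ℝ} (hl : 0 < l) (k : ℕ) :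
    ENNReal.ofReal (l ^ k) * ENNReal.ofReal (l⁻¹ ^ k) = 1 := by
  rw [← ENNReal.ofReal_mul (by positivity), ← mul_pow, mul_inv_cancel₀ hl.ne', one_pow,
    ENNReal.ofReal_one]

lemma relPerimeter_smul_le {M : Set (Euc n)} {l : ℝ} (hl : 0 < l) (hMl : l • M = M)
    (Ω : Set (Euc n)) :
    relPerimeter n M (l • Ω) ≤ ENNReal.ofReal (l ^ n) * relPerimeter n M Ω := by
  refine iSup_le fun Y => iSup_le fun hY => iSup_le fun hYc => iSup_le fun hYs =>
    iSup_le fun hYn => ?_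
  have hY' : ContDiff ℝ (⊤ : ℕ∞) (fun y => Y (l • y)) := hY.comp (contDiff_id.const_smul l)
  have hY'c : HasCompactSupport (fun y => Y (l • y)) := hYc.comp_smul hl.ne'
  have hY's : tsupport (fun y => Y (l • y)) ⊆ M := by
    have hpre : tsupport (fun y => Y (l • y)) ⊆ (fun y : Euc n => l • y) ⁻¹' tsupport Y := by
      refine closure_minimal (fun y hy => ?_)
        ((isClosed_tsupport Y).preimage (continuous_const_smul l))
      exact subset_closure hy
    intro x hx
    have hmem : l • x ∈ M := hYs (hpre hx)
    rw [← hMl] at hmem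
    exact (smul_mem_smul_set_iff₀ hl.ne' M x).1 hmem
  have hY'n : ∀ x, ‖(fun y => Y (l • y)) x‖ ≤ 1 := fun x => hYn _
  rw [integral_divg_smul hY hl Ω, ENNReal.ofReal_mul (by positivity)]
  refine mul_le_mul_right ?_ _
  refine le_iSup_of_le (fun y => Y (l • y)) ?_
  refine le_iSup_of_le hY' ?_
  refine le_iSup_of_le hY'c ?_
  refine le_iSup_of_le hY's ?_
  exact le_iSup_of_le hY'n le_rfl

lemma relPerimeter_smul {M : Set (Euc n)} {l : ℝ} (hl : 0 < l) (hMl : l • M = M)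
    (Ω : Set (Euc n)) :
    relPerimeter n M (l • Ω) = ENNReal.ofReal (l ^ n) * relPerimeter n M Ω := by
  refine le_antisymm (relPerimeter_smul_le hl hMl Ω) ?_
  have h2 := relPerimeter_smul_le (inv_pos.2 hl) (inv_smul_set_eq hl.ne' hMl) (l • Ω)
  rw [inv_smul_smul₀ hl.ne'] at h2
  calc ENNReal.ofReal (l ^ n) * relPerimeter n M Ω
      ≤ ENNReal.ofReal (l ^ n) * (ENNReal.ofReal (l⁻¹ ^ n) * relPerimeter n M (l • Ω)) :=
        mul_le_mul_right h2 _
    _ = relPerimeter n M (l • Ω) := by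
        rw [← mul_assoc, ofReal_pow_mul_inv_pow hl, one_mul]

lemma isoProfile_smul_le {M : Set (Euc n)} {l : ℝ} (hl : 0 < l) (hMl : l • M = M) (W : ℝ) :
    ENNReal.ofReal (l ^ n) * isoProfile n M W ≤ isoProfile n M (l ^ (n+1) * W) := by
  refine le_iInf fun Ω' => le_iInf fun hΩ' => ?_
  obtain ⟨hsub, hmeas, hvol⟩ := hΩ'
  have key : ENNReal.ofReal (l ^ n) * relPerimeter n M (l⁻¹ • Ω') = relPerimeter n M Ω' := by
    rw [← relPerimeter_smul hl hMl, smul_inv_smul₀ hl.ne']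
  rw [← key]
  have hcon : (l⁻¹ • Ω') ⊆ M ∧ MeasurableSet (l⁻¹ • Ω') ∧
      volume (l⁻¹ • Ω') = ENNReal.ofReal W := by
    refine ⟨?_, measurableSet_smul (inv_ne_zero hl.ne') hmeas, ?_⟩
    · rw [← inv_smul_set_eq hl.ne' hMl]; exact Set.smul_set_mono hsub
    · rw [volume_smul (by positivity), hvol, ← ENNReal.ofReal_mul (by positivity)]
      congr 1
      rw [← mul_assoc, ← mul_pow, inv_mul_cancel₀ hl.ne', one_pow, one_mul]
  refine mul_le_mul_right ?_ _
  refine iInf_le_of_le (l⁻¹ • Ω') ?_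
  exact iInf_le_of_le hcon le_rfl

lemma isoProfile_smul {M : Set (Euc n)} {l : ℝ} (hl : 0 < l) (hMl : l • M = M) (W : ℝ) :
    isoProfile n M (l ^ (n+1) * W) = ENNReal.ofReal (l ^ n) * isoProfile n M W := by
  refine le_antisymm ?_ (isoProfile_smul_le hl hMl W)
  have h2 := isoProfile_smul_le (inv_pos.2 hl) (inv_smul_set_eq hl.ne' hMl) (l ^ (n+1) * W)
  have heq : l⁻¹ ^ (n+1) * (l ^ (n+1) * W) = W := by
    rw [← mul_assoc, ← mul_pow, inv_mul_cancel₀ hl.ne', one_pow, one_mul]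
  rw [heq] at h2
  calc isoProfile n M (l ^ (n+1) * W)
      = ENNReal.ofReal (l ^ n) * (ENNReal.ofReal (l⁻¹ ^ n) * isoProfile n M (l ^ (n+1) * W)) := by
        rw [← mul_assoc, ofReal_pow_mul_inv_pow hl, one_mul]
    _ ≤ ENNReal.ofReal (l ^ n) * isoProfile n M W := mul_le_mul_right h2 _

end Aux

/-- In a cone, existence of an isoperimetric region for one volume implies
existence for all volumes. -/
theorem cone_existence_all_volumes {n : ℕ} (C M : Set (Euc n)) (hC : IsSphDomain n C)
    (hM : M = coneOver n C)
    (V₀ : ℝ) (hV₀ : 0 < V₀) (hex : ∃ Ω : Set (Euc n), IsIsoRegion n M V₀ Ω) :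
    ∀ V : ℝ, 0 < V → ∃ Ω : Set (Euc n), IsIsoRegion n M V Ω := by
  intro V hV
  obtain ⟨Ω₀, hsub, hmeas, hvol, hper⟩ := hex
  have hdiv : 0 < V / V₀ := div_pos hV hV₀
  set l : ℝ := (V / V₀) ^ ((n + 1 : ℝ)⁻¹) with hldef
  have hl : 0 < l := Real.rpow_pos_of_pos hdiv _
  have hpow : l ^ (n + 1) = V / V₀ := by
    rw [hldef, ← Real.rpow_natCast ((V / V₀) ^ ((n + 1 : ℝ)⁻¹)) (n + 1),
      ← Real.rpow_mul hdiv.le]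
    push_cast
    rw [inv_mul_cancel₀ (by positivity : (n : ℝ) + 1 ≠ 0), Real.rpow_one]
  have hMl : l • M = M := by rw [hM]; exact smul_coneOver hl
  have hV' : l ^ (n + 1) * V₀ = V := by rw [hpow]; field_simp
  refine ⟨l • Ω₀, ?_, measurableSet_smul hl.ne' hmeas, ?_, ?_⟩
  · rw [← hMl]; exact Set.smul_set_mono hsub
  · rw [volume_smul hl.le, hvol, ← ENNReal.ofReal_mul (by positivity), hV']
  · rw [relPerimeter_smul hl hMl, hper, ← hV', isoProfile_smul hl hMl V₀]
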